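/- For ideals I, J of A* containing A^k (with |A| > 1), one has τ_{I∩J} = τ_I ∩ τ_J and τ_{I∪J} = τ_I ∪ τ_J. -/

import Mathlib

/-!
`τ_{I∪J} = τ_I ∪ τ_J` holds for arbitrary sets of words. For the intersection, two common
suffixes of `u` and `v`, one in `I` and one in `J`, are both suffixes of `u`, so one of them
extends the other; since ideals are closed under extension to the left, the longer one lies in
`I ∩ J`.
-/

/-- The relation `τ_I`: `u` and `v` have a common suffix in `I`. -/
def tauRel {A : Type*} (I : Set (List A)) (u v : List A) : Prop :=
  ∃ w ∈ I, w <:+ u ∧ w <:+ v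

section

variable {A : Type*}

theorem tauRel_mono {I J : Set (List A)} (h : I ⊆ J) {u v : List A} (huv : tauRel I u v) :
    tauRel J u v :=
  let ⟨w, hw, hu, hv⟩ := huv
  ⟨w, h hw, hu, hv⟩

theorem tauRel_union (I J : Set (List A)) (u v : List A) :
    tauRel (I ∪ J) u v ↔ tauRel I u v ∨ tauRel J u v := by
  simp only [tauRel, Set.mem_union, or_and_right, exists_or]

theorem mem_of_suffix_of_mem {I : Set (List A)} (hI : ∀ x w, w ∈ I → x ++ w ∈ I)
    {w w' : List A} (h : w <:+ w') (hw : w ∈ I) : w' ∈ I := by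
  obtain ⟨x, rfl⟩ := h
  exact hI x w hw

theorem tauRel_inter {I J : Set (List A)} (hI : ∀ x w, w ∈ I → x ++ w ∈ I)
    (hJ : ∀ x w, w ∈ J → x ++ w ∈ J) (u v : List A) :
    tauRel (I ∩ J) u v ↔ tauRel I u v ∧ tauRel J u v := by
  refine ⟨fun h => ⟨tauRel_mono Set.inter_subset_left h, tauRel_mono Set.inter_subset_right h⟩,
    ?_⟩
  rintro ⟨⟨w₁, hw₁, hu₁, hv₁⟩, ⟨w₂, hw₂, hu₂, hv₂⟩⟩
  rcases List.suffix_or_suffix_of_suffix hu₁ hu₂ with h | h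
  · exact ⟨w₂, ⟨mem_of_suffix_of_mem hI h hw₁, hw₂⟩, hu₂, hv₂⟩
  · exact ⟨w₁, ⟨hw₁, mem_of_suffix_of_mem hJ h hw₂⟩, hu₁, hv₁⟩

end

theorem tauRel_inter_union_general {A : Type*}
    (k : ℕ) (I J : Set (List A))
    (hI : ∀ u v w : List A, w ∈ I → u ++ w ++ v ∈ I)
    (hJ : ∀ u v w : List A, w ∈ J → u ++ w ++ v ∈ J) :
    ∀ u v : List A, u.length = k → v.length = k →
      (tauRel (I ∩ J) u v ↔ tauRel I u v ∧ tauRel J u v) ∧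
      (tauRel (I ∪ J) u v ↔ tauRel I u v ∨ tauRel J u v) := by
  have hI' : ∀ x w, w ∈ I → x ++ w ∈ I := fun x w hw => by simpa using hI x [] w hw
  have hJ' : ∀ x w, w ∈ J → x ++ w ∈ J := fun x w hw => by simpa using hJ x [] w hw
  exact fun u v _ _ => ⟨tauRel_inter hI' hJ' u v, tauRel_union I J u v⟩

/-- for ideals `I, J` of `A*` containing `A^k` (with `|A| > 1`),
`τ_{I∩J} = τ_I ∩ τ_J` and `τ_{I∪J} = τ_I ∪ τ_J` (as relations on `A^k`). -/
theorem tauRel_inter_union {A : Type*} [Fintype A] (hA : 1 < Fintype.card A)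
    (k : ℕ) (hk : 1 ≤ k) (I J : Set (List A))
    (hI : ∀ u v w : List A, w ∈ I → u ++ w ++ v ∈ I)
    (hJ : ∀ u v w : List A, w ∈ J → u ++ w ++ v ∈ J)
    (hIk : ∀ w : List A, w.length = k → w ∈ I)
    (hJk : ∀ w : List A, w.length = k → w ∈ J) :
    ∀ u v : List A, u.length = k → v.length = k →
      (tauRel (I ∩ J) u v ↔ tauRel I u v ∧ tauRel J u v) ∧
      (tauRel (I ∪ J) u v ↔ tauRel I u v ∨ tauRel J u v) :=
  tauRel_inter_union_general k I J hI hJ
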